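/- Let R be a multivariable skew Laurent polynomial ring of rank m over a division ring K. Let f_n, f_d, g_n, g_d, u, v ∈ R all be nonzero and suppose g_n·u = f_d·v. Then for every group homomorphism φ : ℤ^m → ℝ one has ‖φ‖_{f_n·v} − ‖φ‖_{g_d·u} = (‖φ‖_{f_n} − ‖φ‖_{f_d}) + (‖φ‖_{g_n} − ‖φ‖_{g_d}). -/

import Mathlib

/-- A multivariable skew Laurent polynomial ring of rank `m` over a division ring `K`:
a ring `R` together with an inclusion of `K` and additive subgroups (`ℤ`-submodules)
`V α ⊆ R` for `α ∈ ℤ^m` such that `R` is the internal direct sum of the `V α`,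
`V α * V β = V (α + β)`, `V 0 = K`, and each `V α` is a one-dimensional left
`K`-vector space. -/
structure SkewLaurentRing (K : Type) [DivisionRing K] (m : ℕ) (R : Type) [Ring R] where
  /-- the inclusion of `K` into `R` as the degree-zero part -/
  incl : K →+* R
  /-- the graded components -/
  V : (Fin m → ℤ) → Submodule ℤ R
  /-- `R` is the internal direct sum `⊕_{α ∈ ℤ^m} V α` -/
  isInternal : DirectSum.IsInternal V
  /-- `V α · V β = V (α + β)` (product of additive subgroups) -/
  mul_V : ∀ α β : Fin m → ℤ, V α * V β = V (α + β)
  /-- `V 0 = K` -/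
  V_zero : ∀ x : R, x ∈ V 0 ↔ ∃ k : K, x = incl k
  /-- each `V α` is a one-dimensional left `K`-vector space: `V α = K · t` for some `t ≠ 0` -/
  oneDim : ∀ α : Fin m → ℤ, ∃ t ∈ V α, t ≠ 0 ∧ ∀ x ∈ V α, ∃ k : K, x = incl k * t

/-- `c` is the graded decomposition of `f`: a finitely supported family with
`c α ∈ V α` and `f = ∑_α c α`. -/
def IsDecomp {K : Type} [DivisionRing K] {m : ℕ} {R : Type} [Ring R]
    (L : SkewLaurentRing K m R) (f : R) (c : (Fin m → ℤ) →₀ R) : Prop :=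
  (∀ α, c α ∈ L.V α) ∧ f = c.sum fun _ x => x

/-- For a finite support set `S ⊆ ℤ^m` and a homomorphism `φ : ℤ^m → ℝ`,
`suppNorm φ S = max {φ α - φ β : α, β ∈ S}` (and `0` if `S = ∅`). -/
noncomputable def suppNorm {m : ℕ} (φ : (Fin m → ℤ) →+ ℝ) (S : Finset (Fin m → ℤ)) : ℝ :=
  WithBot.unbotD 0 (S.image ⇑φ).max - WithTop.untopD 0 (S.image ⇑φ).min

set_option synthInstance.maxHeartbeats 1000000
set_option maxHeartbeats 2000000

instance (priority := 5000) SLR.finWF (m : ℕ) : WellFoundedLT (Fin m) := Finite.to_wellFoundedLT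

section Helpers

variable {K : Type} [DivisionRing K] {m : ℕ} {R : Type} [Ring R] (L : SkewLaurentRing K m R)

lemma SkewLaurentRing.nontriv : ∀ _ : SkewLaurentRing K m R, ∃ t : R, t ≠ 0 := fun L => by
  obtain ⟨t, _, ht, _⟩ := L.oneDim 0
  exact ⟨t, ht⟩

lemma SkewLaurentRing.cancel_left {k : K} (hk : k ≠ 0) {x : R} (h : L.incl k * x = 0) : x = 0 := by
  have : L.incl k⁻¹ * (L.incl k * x) = x := by
    rw [← mul_assoc, ← map_mul, inv_mul_cancel₀ hk, map_one, one_mul]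
  rw [h, mul_zero] at this
  exact this.symm

lemma SkewLaurentRing.cancel_right {k : K} (hk : k ≠ 0) {x : R} (h : x * L.incl k = 0) : x = 0 := by
  have : (x * L.incl k) * L.incl k⁻¹ = x := by
    rw [mul_assoc, ← map_mul, mul_inv_cancel₀ hk, map_one, mul_one]
  rw [h, zero_mul] at this
  exact this.symm

lemma SkewLaurentRing.homog_mul_mem {α β : Fin m → ℤ} {x y : R} (hx : x ∈ L.V α) (hy : y ∈ L.V β) :
    x * y ∈ L.V (α + β) := by
  rw [← L.mul_V]
  exact Submodule.mul_mem_mul hx hy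

lemma SkewLaurentRing.homog_mul_ne_zero {α β : Fin m → ℤ} {x y : R} (hx : x ∈ L.V α) (hy : y ∈ L.V β)
    (hx0 : x ≠ 0) (hy0 : y ≠ 0) : x * y ≠ 0 := by
  obtain ⟨ta, hta, hta0, hak⟩ := L.oneDim α
  obtain ⟨tb, htb, htb0, hbk⟩ := L.oneDim β
  obtain ⟨tc, htc, htc0, _⟩ := L.oneDim (α + β)
  -- ta * incl k ∈ V α, so rewrite as incl k' * ta
  have key : ∀ k : K, ∃ k' : K, ta * L.incl k = L.incl k' * ta := by
    intro k
    have hmem : ta * L.incl k ∈ L.V α := by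
      have := L.homog_mul_mem hta ((L.V_zero _).2 ⟨k, rfl⟩)
      rwa [add_zero] at this
    exact hak _ hmem
  -- every element of V (α+β) is incl k * (ta * tb)
  have hall : ∀ z ∈ L.V (α + β), ∃ k : K, z = L.incl k * (ta * tb) := by
    intro z hz
    rw [← L.mul_V] at hz
    refine Submodule.mul_induction_on hz ?_ ?_
    · intro x' hx' y' hy'
      obtain ⟨k1, rfl⟩ := hak _ hx'
      obtain ⟨k2, rfl⟩ := hbk _ hy'
      obtain ⟨k3, hk3⟩ := key k2
      refine ⟨k1 * k3, ?_⟩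
      rw [map_mul, mul_assoc (L.incl k1), ← mul_assoc ta, hk3, mul_assoc, mul_assoc,
        ← mul_assoc (L.incl k1)]
    · rintro x' y' ⟨k1, rfl⟩ ⟨k2, rfl⟩
      exact ⟨k1 + k2, by rw [map_add, add_mul]⟩
  have htab : ta * tb ≠ 0 := by
    intro h0
    obtain ⟨k, hk⟩ := hall tc htc
    rw [h0, mul_zero] at hk
    exact htc0 hk
  obtain ⟨k1, rfl⟩ := hak x hx
  obtain ⟨k2, rfl⟩ := hbk y hy
  have hk1 : k1 ≠ 0 := by rintro rfl; simp at hx0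
  have hk2 : k2 ≠ 0 := by rintro rfl; simp at hy0
  obtain ⟨k3, hk3⟩ := key k2
  have hik3 : L.incl k3 * ta ≠ 0 := by
    rw [← hk3]
    intro h
    exact hta0 (L.cancel_right hk2 h)
  have hk3' : k3 ≠ 0 := by rintro rfl; simp at hik3
  have : L.incl k1 * ta * (L.incl k2 * tb) = L.incl (k1 * k3) * (ta * tb) := by
    rw [map_mul, mul_assoc (L.incl k1), ← mul_assoc ta, hk3, mul_assoc, mul_assoc,
      ← mul_assoc (L.incl k1)]
  rw [this]
  intro h
  exact htab (L.cancel_left (mul_ne_zero hk1 hk3') h)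

end Helpers

section DecompPart
variable {K : Type} [DivisionRing K] {m : ℕ} {R : Type} [Ring R] (L : SkewLaurentRing K m R)

lemma SkewLaurentRing.decomp_zero {c : (Fin m → ℤ) →₀ R} (hc : ∀ α, c α ∈ L.V α)
    (h0 : (c.sum fun _ x => x) = 0) : c = 0 := by
  classical
  set d : DirectSum (Fin m → ℤ) (fun α => L.V α) :=
    ∑ α ∈ c.support, DirectSum.of (fun α => L.V α) α ⟨c α, hc α⟩ with hd
  have hcoe : DirectSum.coeAddMonoidHom L.V d = 0 := by
    rw [hd, map_sum]
    simpa [DirectSum.coeAddMonoidHom_of, Finsupp.sum] using h0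
  have hd0 : d = 0 := by
    apply L.isInternal.injective
    rw [hcoe, map_zero]
  ext α
  by_cases hα : α ∈ c.support
  · have : d α = ⟨c α, hc α⟩ := by
      rw [hd, DFinsupp.finset_sum_apply]
      rw [Finset.sum_eq_single_of_mem α hα]
      · simp [DirectSum.of_eq_same]
      · intro β _ hβ
        exact DirectSum.of_eq_of_ne _ _ _ hβ.symm
    rw [hd0] at this
    simpa using congrArg Subtype.val this.symm
  · simpa using Finsupp.notMem_support_iff.1 hα

lemma SkewLaurentRing.decomp_unique {f : R} {c c' : (Fin m → ℤ) →₀ R}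
    (h : IsDecomp L f c) (h' : IsDecomp L f c') : c = c' := by
  have hsub : ∀ α, (c - c') α ∈ L.V α := fun α => by
    simpa using sub_mem (h.1 α) (h'.1 α)
  have hz : ((c - c').sum fun _ x => x) = 0 := by
    rw [Finsupp.sum_sub_index (fun a b₁ b₂ => rfl)]
    rw [← h.2, ← h'.2, sub_self]
  have := L.decomp_zero hsub hz
  exact sub_eq_zero.1 this

lemma SkewLaurentRing.exists_decomp (f : R) : ∃ c, IsDecomp L f c := by
  classical
  obtain ⟨d, hd⟩ := L.isInternal.surjective f
  refine ⟨⟨d.support, fun α => (d α : R), fun α => ?_⟩, fun α => (d α).2, ?_⟩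
  · simp [DFinsupp.mem_support_iff, Submodule.coe_eq_zero]
  · rw [← hd]
    conv_lhs => rw [← DirectSum.sum_support_of d]
    rw [map_sum, Finsupp.sum]
    simp [DirectSum.coeAddMonoidHom_of]

end DecompPart
section MulPart
open Finsupp
variable {K : Type} [DivisionRing K] {m : ℕ} {R : Type} [Ring R] (L : SkewLaurentRing K m R)

/-- candidate decomposition of a product -/
noncomputable def mulD (cf cg : (Fin m → ℤ) →₀ R) : (Fin m → ℤ) →₀ R :=
  ∑ α ∈ cf.support, ∑ β ∈ cg.support, Finsupp.single (α + β) (cf α * cg β)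

lemma mulD_apply (cf cg : (Fin m → ℤ) →₀ R) (γ : Fin m → ℤ) :
    mulD cf cg γ =
      ∑ α ∈ cf.support, ∑ β ∈ cg.support, if α + β = γ then cf α * cg β else 0 := by
  classical
  rw [mulD, Finsupp.finset_sum_apply]
  refine Finset.sum_congr rfl fun α _ => ?_
  rw [Finsupp.finset_sum_apply]
  refine Finset.sum_congr rfl fun β _ => ?_
  rw [Finsupp.single_apply]

lemma SkewLaurentRing.isDecomp_mulD {f g : R} {cf cg : (Fin m → ℤ) →₀ R}
    (hf : IsDecomp L f cf) (hg : IsDecomp L g cg) : IsDecomp L (f * g) (mulD cf cg) := by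
  classical
  constructor
  · intro γ
    rw [mulD_apply]
    refine Submodule.sum_mem _ fun α _ => Submodule.sum_mem _ fun β _ => ?_
    split_ifs with h
    · exact h ▸ L.homog_mul_mem (hf.1 α) (hg.1 β)
    · exact zero_mem _
  · have hmap : ∀ c : (Fin m → ℤ) →₀ R, (c.sum fun _ x => x) =
        Finsupp.liftAddHom (α := Fin m → ℤ) (M := R) (N := R)
          (fun _ => AddMonoidHom.id R) c := fun c => rfl
    rw [hmap, mulD, map_sum]
    have : ∀ α ∈ cf.support, (Finsupp.liftAddHom (α := Fin m → ℤ) (M := R) (N := R)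
        (fun _ => AddMonoidHom.id R)) (∑ β ∈ cg.support, Finsupp.single (α + β) (cf α * cg β))
        = ∑ β ∈ cg.support, cf α * cg β := by
      intro α _
      rw [map_sum]
      refine Finset.sum_congr rfl fun β _ => ?_
      rw [Finsupp.liftAddHom_apply_single]
      rfl
    rw [Finset.sum_congr rfl this, ← Finset.sum_mul_sum]
    rw [hf.2, hg.2, Finsupp.sum, Finsupp.sum]

lemma mulD_support_subset {cf cg : (Fin m → ℤ) →₀ R} {γ : Fin m → ℤ}
    (h : γ ∈ (mulD cf cg).support) :
    ∃ α ∈ cf.support, ∃ β ∈ cg.support, γ = α + β := by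
  classical
  by_contra hcon
  push_neg at hcon
  have : mulD cf cg γ = 0 := by
    rw [mulD_apply]
    refine Finset.sum_eq_zero fun α hα => Finset.sum_eq_zero fun β hβ => ?_
    rw [if_neg]
    intro he
    exact hcon α hα β hβ he.symm
  exact Finsupp.mem_support_iff.1 h this

end MulPart
section ExtPart
variable {K : Type} [DivisionRing K] {m : ℕ} {R : Type} [Ring R] (L : SkewLaurentRing K m R)

lemma exists_phi_max {ι : Type*} [LinearOrder ι] (key : (Fin m → ℤ) → ι)
    (φ : (Fin m → ℤ) →+ ℝ) (S : Finset (Fin m → ℤ)) (hS : S.Nonempty) :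
    ∃ a ∈ S, (∀ b ∈ S, φ b ≤ φ a) ∧ (∀ b ∈ S, φ b = φ a → key b ≤ key a) := by
  classical
  obtain ⟨a₀, ha₀, hmax⟩ := S.exists_max_image φ hS
  set T := S.filter (fun α => φ α = φ a₀) with hT
  have hTne : T.Nonempty := ⟨a₀, Finset.mem_filter.2 ⟨ha₀, rfl⟩⟩
  obtain ⟨a, haT, hlex⟩ := T.exists_max_image key hTne
  rw [hT, Finset.mem_filter] at haT
  refine ⟨a, haT.1, fun b hb => haT.2 ▸ hmax b hb, fun b hb hφ => ?_⟩
  exact hlex b (by rw [hT, Finset.mem_filter]; exact ⟨hb, hφ.trans haT.2⟩)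

lemma pair_eq_of_le {ι : Type*} [AddCommMonoid ι] [LinearOrder ι] [IsOrderedCancelAddMonoid ι] {a b c d : ι}
    (hab : a ≤ b) (hcd : c ≤ d) (h : a + c = b + d) : a = b ∧ c = d := by
  have h1 : a = b := by
    by_contra hne
    exact absurd h (ne_of_lt (add_lt_add_of_lt_of_le (lt_of_le_of_ne hab hne) hcd))
  refine ⟨h1, ?_⟩
  subst h1
  exact add_left_cancel h

/-- there is an element of the support of the product decomposition dominating all
sums `ψ α + ψ β`. -/
lemma SkewLaurentRing.attain {f g : R} {cf cg c : (Fin m → ℤ) →₀ R}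
    (hf : f ≠ 0) (hg : g ≠ 0)
    (hcf : IsDecomp L f cf) (hcg : IsDecomp L g cg) (hc : IsDecomp L (f * g) c)
    (ψ : (Fin m → ℤ) →+ ℝ) :
    ∃ γ ∈ c.support, ∀ α ∈ cf.support, ∀ β ∈ cg.support, ψ α + ψ β ≤ ψ γ := by
  classical
  have hcm : c = mulD cf cg := L.decomp_unique hc (L.isDecomp_mulD hcf hcg)
  have hfne : cf.support.Nonempty := by
    rw [Finset.nonempty_iff_ne_empty]
    intro h
    exact hf (by rw [hcf.2, Finsupp.sum, h, Finset.sum_empty])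
  have hgne : cg.support.Nonempty := by
    rw [Finset.nonempty_iff_ne_empty]
    intro h
    exact hg (by rw [hcg.2, Finsupp.sum, h, Finset.sum_empty])
  obtain ⟨a, haS, haφ, halex⟩ :=
    exists_phi_max (ι := Lex (Fin m → ℤ)) (fun α => toLex α) ψ cf.support hfne
  obtain ⟨b, hbS, hbφ, hblex⟩ :=
    exists_phi_max (ι := Lex (Fin m → ℤ)) (fun α => toLex α) ψ cg.support hgne
  refine ⟨a + b, ?_, fun α hα β hβ => by
    rw [map_add]; exact add_le_add (haφ α hα) (hbφ β hβ)⟩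
  rw [Finsupp.mem_support_iff, hcm, mulD_apply]
  have hzero : ∀ α ∈ cf.support, ∀ β ∈ cg.support, ¬(α = a ∧ β = b) →
      (if α + β = a + b then cf α * cg β else 0) = 0 := by
    intro α hα β hβ hab
    rw [ite_eq_right_iff]
    intro he
    exfalso
    have h1 : ψ α + ψ β = ψ a + ψ b := by rw [← map_add, ← map_add, he]
    have hψα : ψ α = ψ a := le_antisymm (haφ α hα) (by have := hbφ β hβ; linarith)
    have hψβ : ψ β = ψ b := by linarith [haφ α hα]
    have hsum : toLex α + toLex β = toLex a + toLex b := by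
      rw [← toLex_add, ← toLex_add, he]
    obtain ⟨h2, h3⟩ := pair_eq_of_le (halex α hα hψα) (hblex β hβ hψβ) hsum
    exact hab ⟨toLex.injective h2, toLex.injective h3⟩
  rw [Finset.sum_eq_single_of_mem a haS (fun α hα hne => Finset.sum_eq_zero fun β hβ =>
    hzero α hα β hβ (fun h => hne h.1))]
  rw [Finset.sum_eq_single_of_mem b hbS (fun β hβ hne =>
    hzero a haS β hβ (fun h => hne h.2))]
  rw [if_pos rfl]
  exact L.homog_mul_ne_zero (hcf.1 a) (hcg.1 b)
    (Finsupp.mem_support_iff.1 haS) (Finsupp.mem_support_iff.1 hbS)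

end ExtPart
section NormPart
variable {K : Type} [DivisionRing K] {m : ℕ} {R : Type} [Ring R] (L : SkewLaurentRing K m R)

lemma suppNorm_eq {S : Finset (Fin m → ℤ)} (φ : (Fin m → ℤ) →+ ℝ) (hS : S.Nonempty) :
    suppNorm φ S = (S.image φ).max' (hS.image φ) - (S.image φ).min' (hS.image φ) := by
  rw [suppNorm, ← Finset.coe_max' (hS.image φ), ← Finset.coe_min' (hS.image φ)]
  rfl

lemma support_nonempty_of_decomp {f : R} {c : (Fin m → ℤ) →₀ R} (hf : f ≠ 0)
    (hc : IsDecomp L f c) : c.support.Nonempty := by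
  rw [Finset.nonempty_iff_ne_empty]
  intro h
  exact hf (by rw [hc.2, Finsupp.sum, h, Finset.sum_empty])

lemma SkewLaurentRing.suppNorm_mul {f g : R} {cf cg c : (Fin m → ℤ) →₀ R}
    (hf : f ≠ 0) (hg : g ≠ 0)
    (hcf : IsDecomp L f cf) (hcg : IsDecomp L g cg) (hc : IsDecomp L (f * g) c)
    (φ : (Fin m → ℤ) →+ ℝ) :
    suppNorm φ c.support = suppNorm φ cf.support + suppNorm φ cg.support := by
  classical
  have hcm : c = mulD cf cg := L.decomp_unique hc (L.isDecomp_mulD hcf hcg)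
  have hfne := support_nonempty_of_decomp L hf hcf
  have hgne := support_nonempty_of_decomp L hg hcg
  obtain ⟨γx, hγx, hγxb⟩ := L.attain hf hg hcf hcg hc φ
  obtain ⟨γn, hγn, hγnb⟩ := L.attain hf hg hcf hcg hc (-φ)
  have hcne : c.support.Nonempty := ⟨γx, hγx⟩
  have hsub : ∀ γ ∈ c.support, ∃ α ∈ cf.support, ∃ β ∈ cg.support, γ = α + β := by
    intro γ hγ
    exact mulD_support_subset (by rwa [hcm] at hγ)
  set If := cf.support.image φ
  set Ig := cg.support.image φ
  set Ic := c.support.image φ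
  have hIf := hfne.image (f := ⇑φ)
  have hIg := hgne.image (f := ⇑φ)
  have hIc := hcne.image (f := ⇑φ)
  obtain ⟨α₁, hα₁, hα₁e⟩ := Finset.mem_image.1 (If.max'_mem hIf)
  obtain ⟨β₁, hβ₁, hβ₁e⟩ := Finset.mem_image.1 (Ig.max'_mem hIg)
  obtain ⟨α₂, hα₂, hα₂e⟩ := Finset.mem_image.1 (If.min'_mem hIf)
  obtain ⟨β₂, hβ₂, hβ₂e⟩ := Finset.mem_image.1 (Ig.min'_mem hIg)
  have hmax : Ic.max' hIc = If.max' hIf + Ig.max' hIg := by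
    apply le_antisymm
    · apply Finset.max'_le
      intro x hx
      obtain ⟨γ, hγ, rfl⟩ := Finset.mem_image.1 hx
      obtain ⟨α, hα, β, hβ, rfl⟩ := hsub γ hγ
      rw [map_add]
      exact add_le_add (Finset.le_max' _ _ (Finset.mem_image_of_mem _ hα))
        (Finset.le_max' _ _ (Finset.mem_image_of_mem _ hβ))
    · rw [← hα₁e, ← hβ₁e]
      exact le_trans (hγxb α₁ hα₁ β₁ hβ₁)
        (Finset.le_max' _ _ (Finset.mem_image_of_mem _ hγx))
  have hmin : Ic.min' hIc = If.min' hIf + Ig.min' hIg := by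
    apply le_antisymm
    · rw [← hα₂e, ← hβ₂e]
      refine le_trans (Finset.min'_le _ _ (Finset.mem_image_of_mem _ hγn)) ?_
      have := hγnb α₂ hα₂ β₂ hβ₂
      simp only [AddMonoidHom.neg_apply] at this
      linarith
    · apply Finset.le_min'
      intro x hx
      obtain ⟨γ, hγ, rfl⟩ := Finset.mem_image.1 hx
      obtain ⟨α, hα, β, hβ, rfl⟩ := hsub γ hγ
      rw [map_add]
      exact add_le_add (Finset.min'_le _ _ (Finset.mem_image_of_mem _ hα))
        (Finset.min'_le _ _ (Finset.mem_image_of_mem _ hβ))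
  rw [suppNorm_eq φ hcne, suppNorm_eq φ hfne, suppNorm_eq φ hgne]
  rw [hmax, hmin]
  ring

end NormPart


/-- If `g_n·u = f_d·v` then
`‖φ‖_{f_n·v} - ‖φ‖_{g_d·u} = (‖φ‖_{f_n} - ‖φ‖_{f_d}) + (‖φ‖_{g_n} - ‖φ‖_{g_d})`:
the seminorm of Ore fractions is multiplicative. -/
theorem polyNorm_fraction_mul (K : Type) [DivisionRing K] (m : ℕ) (hm : 0 < m)
    (R : Type) [Ring R] (L : SkewLaurentRing K m R)
    (fn fd gn gd u v : R)
    (hfn : fn ≠ 0) (hfd : fd ≠ 0) (hgn : gn ≠ 0) (hgd : gd ≠ 0)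
    (hu : u ≠ 0) (hv : v ≠ 0)
    (hore : gn * u = fd * v)
    (cfn cfd cgn cgd cnum cden : (Fin m → ℤ) →₀ R)
    (hcfn : IsDecomp L fn cfn) (hcfd : IsDecomp L fd cfd)
    (hcgn : IsDecomp L gn cgn) (hcgd : IsDecomp L gd cgd)
    (hcnum : IsDecomp L (fn * v) cnum) (hcden : IsDecomp L (gd * u) cden)
    (φ : (Fin m → ℤ) →+ ℝ) :
    suppNorm φ cnum.support - suppNorm φ cden.support =
      (suppNorm φ cfn.support - suppNorm φ cfd.support) +
        (suppNorm φ cgn.support - suppNorm φ cgd.support) := by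
  obtain ⟨cv, hcv⟩ := L.exists_decomp v
  obtain ⟨cu, hcu⟩ := L.exists_decomp u
  obtain ⟨c0, hc0⟩ := L.exists_decomp (gn * u)
  have h1 := L.suppNorm_mul hfn hv hcfn hcv hcnum φ
  have h2 := L.suppNorm_mul hgd hu hcgd hcu hcden φ
  have h3 := L.suppNorm_mul hgn hu hcgn hcu hc0 φ
  have h4 := L.suppNorm_mul hfd hv hcfd hcv (hore ▸ hc0) φ
  linarith
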